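/- Let f be an entropy generator and γ ∈ ℝ, and suppose that for all probability distributions P, Q on ℕ one has ∑_{i,j} f(p_i·q_j) = ∑_i f(p_i) + ∑_j f(q_j) + γ·(∑_i f(p_i))·(∑_j f(q_j)). Then for every rational number q ∈ [0,1] and every natural number n ≥ 1: f(q/n) = q·f(1/n) + (1/n)·f(q) + γ·f(q)·f(1/n). -/

import Mathlib

/-- A probability distribution on ℕ: nonnegative weights summing to 1. -/
def IsProbDist (p : ℕ → ℝ) : Prop := (∀ i, 0 ≤ p i) ∧ HasSum p 1

/-- An entropy generator: real analytic on `[0,∞)`, strictly convex on `[0,∞)`,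
with `f 0 = f 1 = 0` and `f' 1 = 1`. -/
def IsEntropyGenerator (f : ℝ → ℝ) : Prop :=
  (∀ x ∈ Set.Ici (0 : ℝ), AnalyticAt ℝ f x) ∧
  StrictConvexOn ℝ (Set.Ici (0 : ℝ)) f ∧
  f 0 = 0 ∧ f 1 = 0 ∧ deriv f 1 = 1

/-!
Write `1 - q = a / b`. Testing pseudo-additivity on the uniform distribution on `n` points
against the distribution with `a` atoms of mass `1/b` and one atom of mass `q` expresses
`f (q/n)` through `f (1/(n b))`; testing it on the uniform distributions on `n` and `b` points
determines `f (1/(n b))`, and eliminating it gives the identity.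
Since `f 0 = 0`, all the sums involved are finite.
-/

open Finset

noncomputable def stepSeq (a : ℕ) (x y : ℝ) : ℕ → ℝ :=
  fun i => if i < a then x else if i = a then y else 0

/-- For `H P = -∑ f (p i)` this says `H (P ⊗ Q) = H P + H Q - γ * H P * H Q`. -/
def IsPseudoAdditive (f : ℝ → ℝ) (γ : ℝ) : Prop :=
  ∀ p q : ℕ → ℝ, IsProbDist p → IsProbDist q →
    (∑' ij : ℕ × ℕ, f (p ij.1 * q ij.2)) =
      (∑' i, f (p i)) + (∑' j, f (q j)) + γ * (∑' i, f (p i)) * (∑' j, f (q j))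

section stepSeq

variable {a : ℕ} {x y : ℝ}

lemma stepSeq_of_lt {i : ℕ} (hi : a < i) : stepSeq a x y i = 0 := by
  simp only [stepSeq, if_neg (show ¬i < a by omega), if_neg (show i ≠ a by omega)]

lemma sum_range_succ_comp_stepSeq (g : ℝ → ℝ) :
    ∑ i ∈ range (a + 1), g (stepSeq a x y i) = a * g x + g y := by
  rw [sum_range_succ, sum_congr rfl fun i hi => by rw [stepSeq, if_pos (mem_range.1 hi)],
    sum_const, card_range, stepSeq, if_neg (lt_irrefl a), if_pos rfl, nsmul_eq_mul]

lemma tsum_comp_stepSeq {g : ℝ → ℝ} (hg : g 0 = 0) :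
    ∑' i, g (stepSeq a x y i) = a * g x + g y := by
  rw [tsum_eq_sum (s := range (a + 1)) fun i hi => by
      rw [stepSeq_of_lt (by simpa using hi), hg],
    sum_range_succ_comp_stepSeq]

lemma tsum_comp_mul_stepSeq {g : ℝ → ℝ} (hg : g 0 = 0) (c : ℕ) (u v : ℝ) :
    ∑' ij : ℕ × ℕ, g (stepSeq a x y ij.1 * stepSeq c u v ij.2) =
      a * (c * g (x * u) + g (x * v)) + (c * g (y * u) + g (y * v)) := by
  rw [tsum_eq_sum (s := range (a + 1) ×ˢ range (c + 1)) fun ij hij => by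
      rw [mem_product, mem_range, mem_range, not_and_or, not_lt, not_lt] at hij
      rcases hij with hi | hj
      · rw [stepSeq_of_lt hi, zero_mul, hg]
      · rw [stepSeq_of_lt hj, mul_zero, hg],
    sum_product]
  calc ∑ i ∈ range (a + 1), ∑ j ∈ range (c + 1), g (stepSeq a x y i * stepSeq c u v j)
      = ∑ i ∈ range (a + 1), (c * g (stepSeq a x y i * u) + g (stepSeq a x y i * v)) :=
        sum_congr rfl fun i _ => sum_range_succ_comp_stepSeq fun t => g (stepSeq a x y i * t)
    _ = _ := sum_range_succ_comp_stepSeq fun s => c * g (s * u) + g (s * v)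

lemma isProbDist_stepSeq (hx : 0 ≤ x) (hy : 0 ≤ y) (hsum : a * x + y = 1) :
    IsProbDist (stepSeq a x y) := by
  refine ⟨fun i => by unfold stepSeq; split_ifs <;> positivity, ?_⟩
  have := hasSum_sum_of_ne_finset_zero (f := stepSeq a x y) (s := range (a + 1))
    (L := SummationFilter.unconditional ℕ) fun i hi => stepSeq_of_lt (by simpa using hi)
  rwa [show ∑ i ∈ range (a + 1), stepSeq a x y i = 1 from
    (sum_range_succ_comp_stepSeq id).trans hsum] at this

end stepSeq

namespace IsPseudoAdditive

variable {f : ℝ → ℝ} {γ : ℝ}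

lemma uniform_mul_stepSeq (h : IsPseudoAdditive f γ) (hf0 : f 0 = 0) {n : ℕ} (hn : 0 < n)
    {c : ℕ} {u v : ℝ} (hu : 0 ≤ u) (hv : 0 ≤ v) (hsum : c * u + v = 1) :
    n * (c * f (1 / n * u) + f (1 / n * v)) =
      n * f (1 / n) + (c * f u + f v) + γ * (n * f (1 / n)) * (c * f u + f v) := by
  have hunif : IsProbDist (stepSeq n (1 / n) 0) :=
    isProbDist_stepSeq (by positivity) le_rfl (by field_simp; ring)
  have := h _ _ hunif (isProbDist_stepSeq hu hv hsum)
  simpa only [tsum_comp_mul_stepSeq hf0, tsum_comp_stepSeq hf0, zero_mul, hf0, mul_zero,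
    add_zero] using this

lemma apply_div (h : IsPseudoAdditive f γ) (hf0 : f 0 = 0) {n : ℕ} (hn : 0 < n)
    {a b : ℕ} (hb : 0 < b) {q : ℝ} (hq : 0 ≤ q) (hab : a / b + q = 1) :
    f (q / n) = q * f (1 / n) + 1 / n * f q + γ * f q * f (1 / n) := by
  have hb' : (b : ℝ) ≠ 0 := by positivity
  have hn' : (n : ℝ) ≠ 0 := by positivity
  have hunif := h.uniform_mul_stepSeq hf0 hn (c := b) (u := 1 / b) (v := 0)
    (by positivity) le_rfl (by field_simp; ring)
  have hmix := h.uniform_mul_stepSeq hf0 hn (c := a) (u := 1 / b) (v := q)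
    (by positivity) hq (by linear_combination hab)
  simp only [mul_zero, hf0, add_zero] at hunif
  rw [← one_div_mul_eq_div (n : ℝ) q]
  generalize f (1 / n * (1 / b)) = X at *
  generalize f (1 / n * q) = F at *
  generalize f (1 / n) = A at *
  linear_combination (norm := skip) (hmix - (a / b) * hunif) / n - A * hab
  field_simp
  ring

end IsPseudoAdditive

lemma Rat.exists_natCast_div_eq {K : Type*} [DivisionRing K] [CharZero K] {r : ℚ} (hr : 0 ≤ r) :
    ∃ a b : ℕ, 0 < b ∧ (a : K) / b = r := by
  refine ⟨r.num.toNat, r.den, r.den_pos, ?_⟩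
  rw [← Int.cast_natCast, Int.toNat_of_nonneg (Rat.num_nonneg.2 hr), Rat.cast_def]

theorem stmt2 (f : ℝ → ℝ) (hf : IsEntropyGenerator f) (γ : ℝ)
    (h : ∀ p q : ℕ → ℝ, IsProbDist p → IsProbDist q →
      (∑' ij : ℕ × ℕ, f (p ij.1 * q ij.2)) =
        (∑' i, f (p i)) + (∑' j, f (q j))
          + γ * (∑' i, f (p i)) * (∑' j, f (q j))) :
    ∀ q : ℚ, 0 ≤ q → q ≤ 1 → ∀ n : ℕ, 1 ≤ n →
      f ((q : ℝ) / (n : ℝ)) =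
        (q : ℝ) * f (1 / (n : ℝ)) + (1 / (n : ℝ)) * f (q : ℝ)
          + γ * f (q : ℝ) * f (1 / (n : ℝ)) := by
  intro q hq0 hq1 n hn
  obtain ⟨a, b, hb, hab⟩ := Rat.exists_natCast_div_eq (K := ℝ) (sub_nonneg.2 hq1)
  exact IsPseudoAdditive.apply_div h hf.2.2.1 hn hb (by exact_mod_cast hq0)
    (by rw [hab]; push_cast; ring)
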